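/- For any reals c > 0 and r with 1 < r < 2, the function g(t) = 2^t/r^t is increasing in t, and the expected per-attempt query cost ∑_{i=0}^{t} min(2^i, 2^t)/r^i divided by the per-attempt success probability 2^t/(r^t · n^c) equals Θ(n^c), uniformly over t. -/

import Mathlib

open Finset

/-!
With `q = 2 / r > 1`, the cap `min (2 ^ i) (2 ^ t)` is inactive for `i ≤ t`, so the expected cost is the
geometric sum `∑_{i ≤ t} q ^ i` and the success probability is `q ^ t / n ^ c`. Their ratio is
`n ^ c` times `(∑_{i ≤ t} q ^ i) / q ^ t`, which lies between its last term `1` and the full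
geometric series `∑_{j ≥ 0} q ^ (-j) = q / (q - 1)`.
-/

lemma pow_le_geom_sum_range_succ {q : ℝ} (hq : 0 ≤ q) (t : ℕ) :
    q ^ t ≤ ∑ i ∈ range (t + 1), q ^ i :=
  single_le_sum (f := (q ^ ·)) (fun i _ => pow_nonneg hq i) (self_mem_range_succ t)

lemma geom_sum_range_succ_le {q : ℝ} (hq : 1 < q) (t : ℕ) :
    ∑ i ∈ range (t + 1), q ^ i ≤ q / (q - 1) * q ^ t := by
  have hq1 : 0 < q - 1 := sub_pos.mpr hq
  rw [geom_sum_eq hq.ne', div_mul_eq_mul_div, ← pow_succ']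
  gcongr
  linarith

lemma one_le_geom_sum_range_succ_div_pow {q : ℝ} (hq : 0 < q) (t : ℕ) :
    1 ≤ (∑ i ∈ range (t + 1), q ^ i) / q ^ t :=
  (one_le_div (pow_pos hq t)).mpr (pow_le_geom_sum_range_succ hq.le t)

lemma geom_sum_range_succ_div_pow_le {q : ℝ} (hq : 1 < q) (t : ℕ) :
    (∑ i ∈ range (t + 1), q ^ i) / q ^ t ≤ q / (q - 1) :=
  (div_le_iff₀ (pow_pos (zero_lt_one.trans hq) t)).mpr (geom_sum_range_succ_le hq t)

lemma sum_min_two_pow_div_pow (r : ℝ) (t : ℕ) :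
    ∑ i ∈ range (t + 1), min ((2 : ℝ) ^ i) ((2 : ℝ) ^ t) / r ^ i =
      ∑ i ∈ range (t + 1), (2 / r) ^ i := by
  refine sum_congr rfl fun i hi => ?_
  rw [min_eq_left (pow_le_pow_right₀ one_le_two (mem_range_succ_iff.mp hi)), div_pow]

theorem stmt_16_general (c r : ℝ) (hr1 : 1 < r) (hr2 : r < 2) :
    (∀ t t' : ℕ, t ≤ t' → (2 : ℝ) ^ t / r ^ t ≤ (2 : ℝ) ^ t' / r ^ t') ∧
      ∃ C₁ C₂ : ℝ, 0 < C₁ ∧ 0 < C₂ ∧ ∀ n : ℝ, 1 ≤ n → ∀ t : ℕ,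
        C₁ * n ^ c ≤
            (∑ i ∈ Finset.range (t + 1), min ((2 : ℝ) ^ i) ((2 : ℝ) ^ t) / r ^ i) /
              ((2 : ℝ) ^ t / (r ^ t * n ^ c)) ∧
          (∑ i ∈ Finset.range (t + 1), min ((2 : ℝ) ^ i) ((2 : ℝ) ^ t) / r ^ i) /
              ((2 : ℝ) ^ t / (r ^ t * n ^ c)) ≤ C₂ * n ^ c := by
  have hq : 1 < 2 / r := (one_lt_div (zero_lt_one.trans hr1)).mpr hr2
  refine ⟨fun t t' htt' => ?_, 1, 2 / r / (2 / r - 1), one_pos,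
    div_pos (zero_lt_one.trans hq) (sub_pos.mpr hq), fun n hn t => ?_⟩
  · simpa only [div_pow] using pow_le_pow_right₀ hq.le htt'
  have hnc : 0 ≤ n ^ c := Real.rpow_nonneg (zero_le_one.trans hn) c
  have hratio :
      (∑ i ∈ range (t + 1), min ((2 : ℝ) ^ i) ((2 : ℝ) ^ t) / r ^ i) /
          ((2 : ℝ) ^ t / (r ^ t * n ^ c)) =
        (∑ i ∈ range (t + 1), (2 / r) ^ i) / (2 / r) ^ t * n ^ c := by
    rw [sum_min_two_pow_div_pow, div_pow, ← div_div, div_div_eq_mul_div, mul_div_right_comm]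
  rw [hratio]
  exact ⟨mul_le_mul_of_nonneg_right (one_le_geom_sum_range_succ_div_pow
      (zero_lt_one.trans hq) t) hnc,
    mul_le_mul_of_nonneg_right (geom_sum_range_succ_div_pow_le hq t) hnc⟩

/-- For `1 < r < 2` and `c > 0`: the function `t ↦ 2^t / r^t` is increasing, and the
expected per-attempt query cost `∑_{i=0}^{t} min(2^i, 2^t)/r^i` divided by the
per-attempt success probability `2^t/(r^t · n^c)` is `Θ(n^c)`, uniformly over `t`. -/
theorem stmt_16 (c r : ℝ) (hc : 0 < c) (hr1 : 1 < r) (hr2 : r < 2) :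
    (∀ t t' : ℕ, t ≤ t' → (2 : ℝ) ^ t / r ^ t ≤ (2 : ℝ) ^ t' / r ^ t') ∧
      ∃ C₁ C₂ : ℝ, 0 < C₁ ∧ 0 < C₂ ∧ ∀ n : ℝ, 1 ≤ n → ∀ t : ℕ,
        C₁ * n ^ c ≤
            (∑ i ∈ Finset.range (t + 1), min ((2 : ℝ) ^ i) ((2 : ℝ) ^ t) / r ^ i) /
              ((2 : ℝ) ^ t / (r ^ t * n ^ c)) ∧
          (∑ i ∈ Finset.range (t + 1), min ((2 : ℝ) ^ i) ((2 : ℝ) ^ t) / r ^ i) /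
              ((2 : ℝ) ^ t / (r ^ t * n ^ c)) ≤ C₂ * n ^ c :=
  stmt_16_general c r hr1 hr2
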